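/- For s, t ∈ [4/9, 5/9], the simplex R(s,t) ⊂ R⁵ with vertices (s,1,1/3,1,1), (s,0,1/3,1,1), (s,2−3t,1/3,0,1), (2−3s,t,0,1/3,0), (0,t,1,1/3,0), (1,t,1,1/3,0) satisfies R(s,t) ⊆ Q₅ = [0,1]⁵ and ξ(R(s,t)) = 5, and all five axial diameters of R(s,t) equal 1. -/

import Mathlib

open Finset MeasureTheory

/-- The unit cube `[0,1]^n` in `ℝ^n`. -/
def unitCube (n : ℕ) : Set (Fin n → ℝ) := {x | ∀ i, 0 ≤ x i ∧ x i ≤ 1}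

/-- The set of vertices of the unit cube, i.e. `{0,1}^n`. -/
def cubeVerts (n : ℕ) : Set (Fin n → ℝ) := {x | ∀ i, x i = 0 ∨ x i = 1}

/-- The (solid) simplex spanned by `n+1` points. -/
def simplexSet {n : ℕ} (v : Fin (n + 1) → (Fin n → ℝ)) : Set (Fin n → ℝ) :=
  convexHull ℝ (Set.range v)

/-- The centroid (center of gravity) of the simplex with vertices `v`. -/
noncomputable def simplexCentroid {n : ℕ} (v : Fin (n + 1) → (Fin n → ℝ)) : Fin n → ℝ :=
  ((n : ℝ) + 1)⁻¹ • ∑ j, v j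

/-- The homothety of the simplex with vertices `v`, with center the centroid and ratio `σ`. -/
noncomputable def homSimplex {n : ℕ} (v : Fin (n + 1) → (Fin n → ℝ)) (σ : ℝ) : Set (Fin n → ℝ) :=
  (fun x => simplexCentroid v + σ • (x - simplexCentroid v)) '' simplexSet v

/-- `ξ(S) = min {σ ≥ 1 : Q_n ⊆ σS}`. -/
noncomputable def xiVal {n : ℕ} (v : Fin (n + 1) → (Fin n → ℝ)) : ℝ :=
  sInf {σ : ℝ | 1 ≤ σ ∧ unitCube n ⊆ homSimplex v σ}

/-- A function `ℝ^n → ℝ` is an affine polynomial of degree at most 1. -/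
def IsAffinePoly {n : ℕ} (f : (Fin n → ℝ) → ℝ) : Prop :=
  ∃ a : Fin n → ℝ, ∃ b : ℝ, ∀ x, f x = ∑ i, a i * x i + b

/-- `lam` is the family of basic Lagrange polynomials of the simplex with vertices `v`. -/
def IsLagrangeBasis {n : ℕ} (v : Fin (n + 1) → (Fin n → ℝ))
    (lam : Fin (n + 1) → (Fin n → ℝ) → ℝ) : Prop :=
  (∀ j, IsAffinePoly (lam j)) ∧ ∀ j k, lam j (v k) = if j = k then 1 else 0

/-- The `i`-th axial diameter of a set `S ⊆ ℝ^n`: the supremum of lengths of segments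
in `S` parallel to the `i`-th coordinate axis. -/
noncomputable def axialDiam {n : ℕ} (S : Set (Fin n → ℝ)) (i : Fin n) : ℝ :=
  sSup {t : ℝ | ∃ x ∈ S, ∃ y ∈ S, (∀ k, k ≠ i → x k = y k) ∧ y i - x i = t}

/-- The family of simplices `R(s,t) ⊂ ℝ⁵`. -/
noncomputable def Rverts (s t : ℝ) : Fin 6 → (Fin 5 → ℝ) :=
  ![![s, 1, 1/3, 1, 1], ![s, 0, 1/3, 1, 1], ![s, 2 - 3*t, 1/3, 0, 1],
    ![2 - 3*s, t, 0, 1/3, 0], ![0, t, 1, 1/3, 0], ![1, t, 1, 1/3, 0]]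


/-!
The barycentric coordinates `λⱼ` of a simplex are affine, and the homothety of ratio `σ` about
the centroid maps the simplex onto `{x | ∀ j, 1 - (n + 1) λⱼ(x) ≤ σ}`. Hence
`ξ = 1 - (n + 1) m`, where `m ≤ 0` is the minimum of all `λⱼ` over the cube. For `R(s,t)` and
`s, t ∈ [4/9, 5/9]` every `λⱼ` is at least `-2/3` on `Q₅`, with equality for `λ₀` at the
origin, so `ξ = 1 + 6 · 2/3 = 5`. Since `R(s,t) ⊆ Q₅`, no axial diameter exceeds `1`, and a unit
segment parallel to each axis is exhibited by the barycentric coordinates of its endpoints.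
-/

theorem unitCube_eq_Icc (n : ℕ) : unitCube n = Set.Icc 0 1 := by
  ext x
  simp [unitCube, Pi.le_def, forall_and]

section Simplex

variable {n : ℕ} {v : Fin (n + 1) → (Fin n → ℝ)}

theorem simplexSet_eq_image_stdSimplex (v : Fin (n + 1) → (Fin n → ℝ)) :
    simplexSet v = (fun w => ∑ j, w j • v j) '' stdSimplex ℝ (Fin (n + 1)) := by
  have hrange : Set.range v =
      Fintype.linearCombination ℝ v '' Set.range fun j => Pi.single j 1 := by
    rw [← Set.range_comp]
    congr 1
    funext j
    simp [Fintype.linearCombination_apply_single]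
  rw [simplexSet, hrange, ← LinearMap.image_convexHull, convexHull_rangle_single_eq_stdSimplex]
  rfl

theorem mem_simplexSet_iff {y : Fin n → ℝ} :
    y ∈ simplexSet v ↔ ∃ w : Fin (n + 1) → ℝ, (∀ j, 0 ≤ w j) ∧ ∑ j, w j = 1 ∧
      ∑ j, w j • v j = y := by
  simp [simplexSet_eq_image_stdSimplex, stdSimplex, and_assoc]

theorem simplexSet_subset_unitCube (hv : ∀ j, v j ∈ unitCube n) : simplexSet v ⊆ unitCube n :=
  convexHull_min (Set.range_subset_iff.2 hv) (unitCube_eq_Icc n ▸ convex_Icc 0 1)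

theorem axialDiam_eq_one {S : Set (Fin n → ℝ)} (hS : S ⊆ unitCube n) {i : Fin n}
    {x y : Fin n → ℝ} (hx : x ∈ S) (hy : y ∈ S) (hxy : y - x = Pi.single i 1) :
    axialDiam S i = 1 := by
  refine IsGreatest.csSup_eq ⟨⟨x, hx, y, hy, fun k hk => ?_, ?_⟩, ?_⟩
  · have hk' := congrFun hxy k
    simp only [Pi.sub_apply, Pi.single_apply, hk, if_false] at hk'
    linarith
  · simpa using congrFun hxy i
  · rintro _ ⟨a, ha, b, hb, -, rfl⟩
    linarith [(hS ha i).1, (hS hb i).2]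

theorem IsLagrangeBasis.apply_sum_smul {lam : Fin (n + 1) → (Fin n → ℝ) → ℝ}
    (hlam : IsLagrangeBasis v lam) (j : Fin (n + 1)) {μ : Fin (n + 1) → ℝ}
    (hμ : ∑ k, μ k = 1) : lam j (∑ k, μ k • v k) = μ j := by
  obtain ⟨a, b, ha⟩ := hlam.1 j
  calc lam j (∑ k, μ k • v k) = ∑ k, μ k * lam j (v k) := by
        simp only [ha, Finset.sum_apply, Pi.smul_apply, smul_eq_mul, Finset.mul_sum, mul_add,
          Finset.sum_add_distrib, ← Finset.sum_mul, hμ, one_mul]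
        rw [Finset.sum_comm]
        simp only [mul_left_comm]
    _ = μ j := by simp [hlam.2]

noncomputable def homothetyWeight (n : ℕ) (σ a : ℝ) : ℝ :=
  ((n : ℝ) + 1)⁻¹ + σ * (a - ((n : ℝ) + 1)⁻¹)

theorem simplexCentroid_add_smul_sum_smul_sub (v : Fin (n + 1) → (Fin n → ℝ)) (σ : ℝ)
    (w : Fin (n + 1) → ℝ) :
    simplexCentroid v + σ • (∑ j, w j • v j - simplexCentroid v) =
      ∑ j, homothetyWeight n σ (w j) • v j := by
  simp only [homothetyWeight, simplexCentroid, Finset.smul_sum, ← Finset.sum_sub_distrib,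
    ← Finset.sum_add_distrib, add_smul, mul_smul, sub_smul]

theorem sum_homothetyWeight (σ : ℝ) {w : Fin (n + 1) → ℝ} (hw : ∑ j, w j = 1) :
    ∑ j, homothetyWeight n σ (w j) = 1 := by
  simp only [homothetyWeight, Finset.sum_add_distrib, ← Finset.mul_sum, Finset.sum_sub_distrib,
    hw, Finset.sum_const, Finset.card_univ, Fintype.card_fin, nsmul_eq_mul]
  push_cast
  field_simp
  ring

theorem one_sub_mul_le_of_mem_homSimplex {lam : Fin (n + 1) → (Fin n → ℝ) → ℝ}
    (hlam : IsLagrangeBasis v lam) {σ : ℝ} (hσ : 0 ≤ σ) {x : Fin n → ℝ}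
    (hx : x ∈ homSimplex v σ) (j : Fin (n + 1)) : 1 - ((n : ℝ) + 1) * lam j x ≤ σ := by
  obtain ⟨y, hy, rfl⟩ := hx
  obtain ⟨w, hw0, hw1, rfl⟩ := mem_simplexSet_iff.1 hy
  dsimp only
  rw [simplexCentroid_add_smul_sum_smul_sub, hlam.apply_sum_smul j (sum_homothetyWeight σ hw1)]
  have hweight : ((n : ℝ) + 1) * homothetyWeight n σ (w j) = 1 - σ + (n + 1) * σ * w j := by
    rw [homothetyWeight]
    field_simp
    ring
  rw [hweight]
  nlinarith [mul_nonneg (mul_nonneg (by positivity : (0 : ℝ) ≤ n + 1) hσ) (hw0 j)]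

theorem mem_homSimplex_of_forall_le {lam : Fin (n + 1) → (Fin n → ℝ) → ℝ}
    (hsum : ∀ x, ∑ j, lam j x = 1) (hrep : ∀ x, ∑ j, lam j x • v j = x) {σ : ℝ} (hσ : 0 < σ)
    {x : Fin n → ℝ} (hx : ∀ j, 1 - ((n : ℝ) + 1) * lam j x ≤ σ) : x ∈ homSimplex v σ := by
  refine ⟨simplexCentroid v + σ⁻¹ • (x - simplexCentroid v), ?_, ?_⟩
  · refine mem_simplexSet_iff.2 ⟨_, fun j => ?_, sum_homothetyWeight σ⁻¹ (hsum x), ?_⟩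
    · have hweight : homothetyWeight n σ⁻¹ (lam j x) =
          (σ - (1 - ((n : ℝ) + 1) * lam j x)) / (((n : ℝ) + 1) * σ) := by
        rw [homothetyWeight]
        field_simp
        ring
      rw [hweight]
      exact div_nonneg (sub_nonneg.2 (hx j)) (by positivity)
    · rw [← simplexCentroid_add_smul_sum_smul_sub, hrep]
  · dsimp only
    rw [add_sub_cancel_left, smul_smul, mul_inv_cancel₀ hσ.ne', one_smul, add_sub_cancel]

theorem xiVal_eq_one_sub_mul {lam : Fin (n + 1) → (Fin n → ℝ) → ℝ}
    (hlam : IsLagrangeBasis v lam) (hsum : ∀ x, ∑ j, lam j x = 1)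
    (hrep : ∀ x, ∑ j, lam j x • v j = x) {m : ℝ} (hm : m ≤ 0)
    (hmin : ∀ x ∈ unitCube n, ∀ j, m ≤ lam j x) {x₀ : Fin n → ℝ} (hx₀ : x₀ ∈ unitCube n)
    {j₀ : Fin (n + 1)} (hj₀ : lam j₀ x₀ = m) :
    xiVal v = 1 - ((n : ℝ) + 1) * m := by
  have hσ : 1 ≤ 1 - ((n : ℝ) + 1) * m := by nlinarith
  refine IsLeast.csInf_eq ⟨⟨hσ, fun x hx => ?_⟩, fun σ ⟨hσ1, hσQ⟩ => ?_⟩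
  · refine mem_homSimplex_of_forall_le hsum hrep (by linarith) fun j => ?_
    nlinarith [hmin x hx j]
  · simpa [hj₀] using one_sub_mul_le_of_mem_homSimplex hlam (by linarith) (hσQ hx₀) j₀

end Simplex

section Rst

variable {s t : ℝ}

theorem Rverts_mem_unitCube (hs : s ∈ Set.Icc (4/9 : ℝ) (5/9))
    (ht : t ∈ Set.Icc (4/9 : ℝ) (5/9)) (j : Fin 6) : Rverts s t j ∈ unitCube 5 := by
  obtain ⟨hs1, hs2⟩ := hs
  obtain ⟨ht1, ht2⟩ := ht
  intro i
  fin_cases j <;> fin_cases i <;> norm_num [Rverts] <;> constructor <;> linarith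

noncomputable def RlagrangeCoeff (s t : ℝ) : Fin 6 → Fin 5 → ℝ :=
  ![![0, 1, 0, 2 - 3*t, 3*t - 4/3], ![0, -1, 0, 3*t - 1, 5/3 - 3*t], ![0, 0, 0, -1, 2/3],
    ![0, 0, -1, 0, -2/3], ![-1, 0, 3*s - 1, 0, 3*s - 5/3], ![1, 0, 2 - 3*s, 0, 4/3 - 3*s]]

noncomputable def RlagrangeConst (s : ℝ) : Fin 6 → ℝ := ![-2/3, 1/3, 1/3, 1, 2 - 3*s, 3*s - 2]

noncomputable def Rlagrange (s t : ℝ) (j : Fin 6) (x : Fin 5 → ℝ) : ℝ :=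
  ∑ i, RlagrangeCoeff s t j i * x i + RlagrangeConst s j

theorem Rlagrange_isLagrangeBasis (s t : ℝ) : IsLagrangeBasis (Rverts s t) (Rlagrange s t) := by
  refine ⟨fun j => ⟨_, _, fun _ => rfl⟩, fun j k => ?_⟩
  fin_cases j <;> fin_cases k <;>
    simp [Rlagrange, RlagrangeCoeff, RlagrangeConst, Rverts, Fin.sum_univ_five] <;> ring

theorem sum_Rlagrange (s t : ℝ) (x : Fin 5 → ℝ) : ∑ j, Rlagrange s t j x = 1 := by
  simp [Rlagrange, RlagrangeCoeff, RlagrangeConst, Fin.sum_univ_five, Fin.sum_univ_six]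
  ring

theorem sum_Rlagrange_smul (s t : ℝ) (x : Fin 5 → ℝ) :
    ∑ j, Rlagrange s t j x • Rverts s t j = x := by
  funext i
  fin_cases i <;>
    simp [Rlagrange, RlagrangeCoeff, RlagrangeConst, Rverts, Fin.sum_univ_five,
      Fin.sum_univ_six] <;> ring

theorem Rlagrange_zero_zero (s t : ℝ) : Rlagrange s t 0 0 = -2/3 := by
  simp [Rlagrange, RlagrangeConst]

theorem neg_two_thirds_le_Rlagrange (hs : s ∈ Set.Icc (4/9 : ℝ) (5/9))
    (ht : t ∈ Set.Icc (4/9 : ℝ) (5/9)) {x : Fin 5 → ℝ} (hx : x ∈ unitCube 5) (j : Fin 6) :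
    -2/3 ≤ Rlagrange s t j x := by
  obtain ⟨hs1, hs2⟩ := hs
  obtain ⟨ht1, ht2⟩ := ht
  obtain ⟨⟨h0, h0'⟩, ⟨h1, h1'⟩, ⟨h2, h2'⟩, ⟨h3, h3'⟩, ⟨h4, h4'⟩⟩ :=
    And.intro (hx 0) (And.intro (hx 1) (And.intro (hx 2) (And.intro (hx 3) (hx 4))))
  fin_cases j <;> simp [Rlagrange, RlagrangeCoeff, RlagrangeConst, Fin.sum_univ_five] <;>
    nlinarith [mul_nonneg h3 (by linarith : (0:ℝ) ≤ 2 - 3*t)]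

/- Barycentric coordinates of the lower and upper endpoints of a unit segment in `R(s,t)`
parallel to the `i`-th axis. -/
noncomputable def RaxialLow (s : ℝ) : Fin 5 → Fin 6 → ℝ :=
  ![![0, 0, 0, 0, 1, 0], ![0, 1, 0, 0, 0, 0], ![0, 0, 0, 1, 0, 0], ![0, 0, 1, 0, 0, 0],
    ![0, 0, 0, 2/3, 5/3 - 3*s, 3*s - 4/3]]

noncomputable def RaxialHigh (s t : ℝ) : Fin 5 → Fin 6 → ℝ :=
  ![![0, 0, 0, 0, 0, 1], ![1, 0, 0, 0, 0, 0], ![0, 0, 0, 0, 3*s - 1, 2 - 3*s],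
    ![2 - 3*t, 3*t - 1, 0, 0, 0, 0], ![3*t - 4/3, 5/3 - 3*t, 2/3, 0, 0, 0]]

theorem RaxialLow_mem_stdSimplex (hs : s ∈ Set.Icc (4/9 : ℝ) (5/9)) (i : Fin 5) :
    RaxialLow s i ∈ stdSimplex ℝ (Fin 6) := by
  obtain ⟨hs1, hs2⟩ := hs
  refine ⟨fun j => ?_, ?_⟩
  · fin_cases i <;> fin_cases j <;> simp [RaxialLow] <;> linarith
  · fin_cases i <;> simp [RaxialLow, Fin.sum_univ_six]
    ring

theorem RaxialHigh_mem_stdSimplex (hs : s ∈ Set.Icc (4/9 : ℝ) (5/9))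
    (ht : t ∈ Set.Icc (4/9 : ℝ) (5/9)) (i : Fin 5) : RaxialHigh s t i ∈ stdSimplex ℝ (Fin 6) := by
  obtain ⟨hs1, hs2⟩ := hs
  obtain ⟨ht1, ht2⟩ := ht
  refine ⟨fun j => ?_, ?_⟩
  · fin_cases i <;> fin_cases j <;> simp [RaxialHigh] <;> linarith
  · fin_cases i <;> simp [RaxialHigh, Fin.sum_univ_six] <;> ring

theorem sum_RaxialHigh_smul_sub_sum_RaxialLow_smul (s t : ℝ) (i : Fin 5) :
    ∑ j, RaxialHigh s t i j • Rverts s t j - ∑ j, RaxialLow s i j • Rverts s t j =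
      Pi.single i 1 := by
  funext k
  fin_cases i <;> fin_cases k <;>
    simp [RaxialHigh, RaxialLow, Rverts, Fin.sum_univ_six] <;> ring

end Rst

/-- for `s, t ∈ [4/9, 5/9]`, `R(s,t) ⊆ Q₅`, `ξ(R(s,t)) = 5`, and all five
axial diameters of `R(s,t)` equal `1`. -/
theorem Rst_extremal (s t : ℝ) (hs : s ∈ Set.Icc (4/9 : ℝ) (5/9))
    (ht : t ∈ Set.Icc (4/9 : ℝ) (5/9)) :
    simplexSet (Rverts s t) ⊆ unitCube 5 ∧
    xiVal (Rverts s t) = 5 ∧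
    ∀ i, axialDiam (simplexSet (Rverts s t)) i = 1 := by
  have hcube := simplexSet_subset_unitCube (Rverts_mem_unitCube hs ht)
  refine ⟨hcube, ?_, fun i => ?_⟩
  · have hxi := xiVal_eq_one_sub_mul (Rlagrange_isLagrangeBasis s t) (sum_Rlagrange s t)
      (sum_Rlagrange_smul s t) (by norm_num) (fun x hx => neg_two_thirds_le_Rlagrange hs ht hx)
      (x₀ := 0) (fun _ => by norm_num) (Rlagrange_zero_zero s t)
    norm_num at hxi
    exact hxi
  · rw [simplexSet_eq_image_stdSimplex] at hcube ⊢
    exact axialDiam_eq_one hcube ⟨_, RaxialLow_mem_stdSimplex hs i, rfl⟩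
      ⟨_, RaxialHigh_mem_stdSimplex hs ht i, rfl⟩ (sum_RaxialHigh_smul_sub_sum_RaxialLow_smul s t i)
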